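/- (Intermediate convexity bound (6.210) from the proof of Theorem 2.) Let a, T̃ > 0, α ∈ (0,1/2), d > 0 and Ω = (0,a) × (0,T̃). There exists B > 0 depending only on d such that for all λ ≥ 1, all γ > 0, and all functions q₁, q₂ : ℝ × ℝ → ℝ of class C⁴ on an open neighborhood of the closure of Ω with |∂_x^i ∂_t^j q_k(x,t)| ≤ d on the closure of Ω for all i + j ≤ 2 and k = 1, 2, setting h = q₂ − q₁ one has: K_{λ,γ}(q₂) − K_{λ,γ}(q₁) − A_{λ,γ}(q₁)(h) ≥ (1/2)·∫_Ω (h_xx − 2 h_xt)² ψ_λ dx dt − B·∫_Ω (h_x(x,0)² + h(x,t)²) ψ_λ(x,t) dx dt + γ·‖h‖²_{H⁴(Ω)}. -/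

import Mathlib

open MeasureTheory Set

/-- Partial derivative in the first variable. -/
noncomputable def partialX (f : ℝ × ℝ → ℝ) : ℝ × ℝ → ℝ :=
  fun p => deriv (fun x => f (x, p.2)) p.1

/-- Partial derivative in the second variable. -/
noncomputable def partialT (f : ℝ × ℝ → ℝ) : ℝ × ℝ → ℝ :=
  fun p => deriv (fun t => f (p.1, t)) p.2

/-- Higher partial derivative ∂_x^i ∂_t^j f. -/
noncomputable def pd (f : ℝ × ℝ → ℝ) : ℕ → ℕ → ℝ × ℝ → ℝ
  | 0, 0 => f
  | 0, j + 1 => partialT (pd f 0 j)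
  | i + 1, j => partialX (pd f i j)

/-- The rectangle Ω = (0,a) × (0,T̃). -/
def Rect (a T : ℝ) : Set (ℝ × ℝ) := Ioo (0 : ℝ) a ×ˢ Ioo (0 : ℝ) T

/-- The triangle R_{a,α,μ} = {(x,t) : x > 0, t > 0, x + αt < 2αa − μ}. -/
def Tri (a α μ : ℝ) : Set (ℝ × ℝ) :=
  {p : ℝ × ℝ | 0 < p.1 ∧ 0 < p.2 ∧ p.1 + α * p.2 < 2 * α * a - μ}

/-- The Carleman weight ψ_λ(x,t) = exp(−2λ(x + αt)). -/
noncomputable def carlemanWeight (α lam : ℝ) : ℝ × ℝ → ℝ :=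
  fun p => Real.exp (-2 * lam * (p.1 + α * p.2))

/-- The squared Sobolev H^k(Ω) norm: Σ_{i+j≤k} ∫_Ω (∂_x^i ∂_t^j f)². -/
noncomputable def sobNormSq (k : ℕ) (Ω : Set (ℝ × ℝ)) (f : ℝ × ℝ → ℝ) : ℝ :=
  ∑ i ∈ Finset.range (k + 1), ∑ j ∈ Finset.range (k + 1 - i),
    ∫ p in Ω, (pd f i j p) ^ 2

/-- The Sobolev H^k(Ω) inner product. -/
noncomputable def sobInner (k : ℕ) (Ω : Set (ℝ × ℝ)) (f g : ℝ × ℝ → ℝ) : ℝ :=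
  ∑ i ∈ Finset.range (k + 1), ∑ j ∈ Finset.range (k + 1 - i),
    ∫ p in Ω, (pd f i j p) * (pd g i j p)

/-- The squared H¹ norm on a planar set. -/
noncomputable def h1NormSq (R : Set (ℝ × ℝ)) (h : ℝ × ℝ → ℝ) : ℝ :=
  ∫ p in R, ((h p) ^ 2 + (partialX h p) ^ 2 + (partialT h p) ^ 2)

/-- The squared H¹(0,ℓ) norm of a function of one variable. -/
noncomputable def h1NormSq1D (ℓ : ℝ) (g : ℝ → ℝ) : ℝ :=
  ∫ x in Ioo (0 : ℝ) ℓ, ((g x) ^ 2 + (deriv g x) ^ 2)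

/-- The quasilinear operator M(q) = q_xx − 2 q_xt + 4 q_x(x,0) q. -/
noncomputable def Mop (q : ℝ × ℝ → ℝ) : ℝ × ℝ → ℝ :=
  fun p => partialX (partialX q) p - 2 * partialT (partialX q) p
    + 4 * partialX q (p.1, 0) * q p

/-- The weighted Tikhonov functional K_{λ,γ}. -/
noncomputable def Kfunc (a T α lam γ : ℝ) (q : ℝ × ℝ → ℝ) : ℝ :=
  (∫ p in Rect a T, (Mop q p) ^ 2 * carlemanWeight α lam p)
    + γ * sobNormSq 4 (Rect a T) q

/-- The linearization A_{λ,γ}(q)(h) of K_{λ,γ} at q in direction h. -/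
noncomputable def Afunc (a T α lam γ : ℝ) (q h : ℝ × ℝ → ℝ) : ℝ :=
  (∫ p in Rect a T, 2 * Mop q p *
      (partialX (partialX h) p - 2 * partialT (partialX h) p
        + 4 * partialX h (p.1, 0) * q p + 4 * partialX q (p.1, 0) * h p)
      * carlemanWeight α lam p)
    + 2 * γ * sobInner 4 (Rect a T) q h

/-- f is C⁴ on an open neighborhood of the closed rectangle [0,a] × [0,T]. -/
def C4Near (a T : ℝ) (f : ℝ × ℝ → ℝ) : Prop :=
  ∃ U : Set (ℝ × ℝ), IsOpen U ∧ Icc (0 : ℝ) a ×ˢ Icc (0 : ℝ) T ⊆ U ∧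
    ContDiffOn ℝ 4 f U

/-- All partial derivatives of order ≤ 2 of f are bounded by d on [0,a] × [0,T]. -/
def DerivBound2 (a T d : ℝ) (f : ℝ × ℝ → ℝ) : Prop :=
  ∀ i j : ℕ, i + j ≤ 2 → ∀ p ∈ Icc (0 : ℝ) a ×ˢ Icc (0 : ℝ) T, |pd f i j p| ≤ d

/-!
With h = q₂ - q₁ and P = h_xx - 2 h_xt, the quadratic term of M gives M(q₂) = M(q₁) + P + E with
E = 4 h_x(x,0) q₂ + 4 q₁_x(x,0) h, so the weighted integrand of K(q₂) - K(q₁) - A(q₁)(h) is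
(P + E)² + 8 M(q₁) h_x(x,0) h. Pointwise, (P + E)² ≥ P²/2 - E², E² ≤ 32 d² (h_x(x,0)² + h²) and
8 |M(q₁) h_x(x,0) h| ≤ 4 (3d + 4d²) (h_x(x,0)² + h²), so B = 48 d² + 12 d works. The Tikhonov terms
combine by polarization: ‖q₂‖² - ‖q₁‖² - 2⟨q₁, h⟩ = ‖h‖².
-/

open Filter Topology

section PartialDerivatives

variable {f g : ℝ × ℝ → ℝ} {U : Set (ℝ × ℝ)} {p : ℝ × ℝ}

theorem hasDerivAt_partialX (hf : DifferentiableAt ℝ f p) :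
    HasDerivAt (fun x => f (x, p.2)) (fderiv ℝ f p (1, 0)) p.1 :=
  hf.hasFDerivAt.comp_hasDerivAt_of_eq p.1 ((hasDerivAt_id _).prodMk (hasDerivAt_const _ _)) rfl

theorem hasDerivAt_partialT (hf : DifferentiableAt ℝ f p) :
    HasDerivAt (fun t => f (p.1, t)) (fderiv ℝ f p (0, 1)) p.2 :=
  hf.hasFDerivAt.comp_hasDerivAt_of_eq p.2 ((hasDerivAt_const _ _).prodMk (hasDerivAt_id _)) rfl

theorem partialX_eq_fderiv (hf : DifferentiableAt ℝ f p) : partialX f p = fderiv ℝ f p (1, 0) :=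
  (hasDerivAt_partialX hf).deriv

theorem partialT_eq_fderiv (hf : DifferentiableAt ℝ f p) : partialT f p = fderiv ℝ f p (0, 1) :=
  (hasDerivAt_partialT hf).deriv

theorem partialX_sub (hf : DifferentiableAt ℝ f p) (hg : DifferentiableAt ℝ g p) :
    partialX (f - g) p = partialX f p - partialX g p :=
  ((hasDerivAt_partialX hf).sub (hasDerivAt_partialX hg)).deriv.trans
    (by rw [partialX_eq_fderiv hf, partialX_eq_fderiv hg])

theorem partialT_sub (hf : DifferentiableAt ℝ f p) (hg : DifferentiableAt ℝ g p) :
    partialT (f - g) p = partialT f p - partialT g p :=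
  ((hasDerivAt_partialT hf).sub (hasDerivAt_partialT hg)).deriv.trans
    (by rw [partialT_eq_fderiv hf, partialT_eq_fderiv hg])

theorem Filter.EventuallyEq.partialX_eq (hfg : f =ᶠ[𝓝 p] g) : partialX f p = partialX g p :=
  (hfg.comp_tendsto ((continuous_id.prodMk continuous_const).tendsto' p.1 p rfl)).deriv_eq

theorem Filter.EventuallyEq.partialT_eq (hfg : f =ᶠ[𝓝 p] g) : partialT f p = partialT g p :=
  (hfg.comp_tendsto ((continuous_const.prodMk continuous_id).tendsto' p.2 p rfl)).deriv_eq

theorem Set.EqOn.partialX (hU : IsOpen U) (hfg : EqOn f g U) : EqOn (partialX f) (partialX g) U :=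
  fun _ hp => (hfg.eventuallyEq_of_mem (hU.mem_nhds hp)).partialX_eq

theorem Set.EqOn.partialT (hU : IsOpen U) (hfg : EqOn f g U) : EqOn (partialT f) (partialT g) U :=
  fun _ hp => (hfg.eventuallyEq_of_mem (hU.mem_nhds hp)).partialT_eq

theorem eqOn_partialX_sub (hU : IsOpen U) (hf : DifferentiableOn ℝ f U)
    (hg : DifferentiableOn ℝ g U) : EqOn (partialX (f - g)) (partialX f - partialX g) U :=
  fun _ hp => partialX_sub (hf.differentiableAt (hU.mem_nhds hp))
    (hg.differentiableAt (hU.mem_nhds hp))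

theorem eqOn_partialT_sub (hU : IsOpen U) (hf : DifferentiableOn ℝ f U)
    (hg : DifferentiableOn ℝ g U) : EqOn (partialT (f - g)) (partialT f - partialT g) U :=
  fun _ hp => partialT_sub (hf.differentiableAt (hU.mem_nhds hp))
    (hg.differentiableAt (hU.mem_nhds hp))

theorem ContDiffOn.partialX {m n : WithTop ℕ∞} (hU : IsOpen U) (hf : ContDiffOn ℝ n f U)
    (hmn : m + 1 ≤ n) : ContDiffOn ℝ m (partialX f) U :=
  ((hf.fderiv_of_isOpen hU hmn).clm_apply contDiffOn_const).congr fun _ hp =>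
    partialX_eq_fderiv <| (hf.differentiableOn (zero_lt_one.trans_le (le_add_self.trans hmn)).ne')
      |>.differentiableAt (hU.mem_nhds hp)

theorem ContDiffOn.partialT {m n : WithTop ℕ∞} (hU : IsOpen U) (hf : ContDiffOn ℝ n f U)
    (hmn : m + 1 ≤ n) : ContDiffOn ℝ m (partialT f) U :=
  ((hf.fderiv_of_isOpen hU hmn).clm_apply contDiffOn_const).congr fun _ hp =>
    partialT_eq_fderiv <| (hf.differentiableOn (zero_lt_one.trans_le (le_add_self.trans hmn)).ne')
      |>.differentiableAt (hU.mem_nhds hp)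

theorem partialT_partialX_eq (hU : IsOpen U) (hf : ContDiffOn ℝ 2 f U) (hp : p ∈ U) :
    partialT (partialX f) p = partialX (partialT f) p := by
  have hf₂ : ContDiffAt ℝ 2 f p := hf.contDiffAt (hU.mem_nhds hp)
  have hf' : DifferentiableAt ℝ (fderiv ℝ f) p :=
    (hf₂.fderiv_right (m := 1) le_rfl).differentiableAt one_ne_zero
  have hdir (v : ℝ × ℝ) : DifferentiableAt ℝ (fun q => fderiv ℝ f q v) p :=
    (ContinuousLinearMap.apply ℝ ℝ v).differentiableAt.comp p hf'
  have hf_near : ∀ᶠ q in 𝓝 p, DifferentiableAt ℝ f q :=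
    eventually_of_mem (hU.mem_nhds hp) fun q hq =>
      (hf.differentiableOn two_ne_zero).differentiableAt (hU.mem_nhds hq)
  have hX : partialX f =ᶠ[𝓝 p] fun q => fderiv ℝ f q (1, 0) :=
    hf_near.mono fun _ => partialX_eq_fderiv
  have hT : partialT f =ᶠ[𝓝 p] fun q => fderiv ℝ f q (0, 1) :=
    hf_near.mono fun _ => partialT_eq_fderiv
  rw [hX.partialT_eq, hT.partialX_eq, partialT_eq_fderiv (hdir _), partialX_eq_fderiv (hdir _),
    fderiv_clm_apply hf' (differentiableAt_const _), fderiv_clm_apply hf' (differentiableAt_const _)]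
  simpa using hf₂.isSymmSndFDerivAt (by simp) (0, 1) (1, 0)

end PartialDerivatives

section IteratedPartials

variable {f g : ℝ × ℝ → ℝ} {U : Set (ℝ × ℝ)}

theorem contDiffOn_pd (hU : IsOpen U) {i j m : ℕ} (hf : ContDiffOn ℝ (i + j + m : ℕ) f U) :
    ContDiffOn ℝ m (pd f i j) U := by
  induction i, j using pd.induct generalizing m with
  | case1 => simpa [pd] using hf
  | case2 j ih =>
    rw [pd]
    exact (ih (m := m + 1) (by rwa [show 0 + j + (m + 1) = 0 + (j + 1) + m by omega])).partialT hU
      (by push_cast; rfl)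
  | case3 i j ih =>
    rw [pd]
    exact (ih (m := m + 1) (by rwa [show i + j + (m + 1) = i + 1 + j + m by omega])).partialX hU
      (by push_cast; rfl)

theorem eqOn_pd_sub (hU : IsOpen U) {i j : ℕ} (hf : ContDiffOn ℝ (i + j : ℕ) f U)
    (hg : ContDiffOn ℝ (i + j : ℕ) g U) : EqOn (pd (f - g) i j) (pd f i j - pd g i j) U := by
  induction i, j using pd.induct with
  | case1 => simp [pd, EqOn]
  | case2 j ih =>
    have hdiff {F : ℝ × ℝ → ℝ} (hF : ContDiffOn ℝ (0 + (j + 1) : ℕ) F U) :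
        DifferentiableOn ℝ (pd F 0 j) U :=
      (contDiffOn_pd hU (m := 1) (by rwa [show 0 + j + 1 = 0 + (j + 1) by omega])).differentiableOn
        one_ne_zero
    simp only [pd]
    exact ((ih (hf.of_le (by norm_cast; omega)) (hg.of_le (by norm_cast; omega))).partialT hU).trans
      (eqOn_partialT_sub hU (hdiff hf) (hdiff hg))
  | case3 i j ih =>
    have hdiff {F : ℝ × ℝ → ℝ} (hF : ContDiffOn ℝ (i + 1 + j : ℕ) F U) :
        DifferentiableOn ℝ (pd F i j) U :=
      (contDiffOn_pd hU (m := 1) (by rwa [show i + j + 1 = i + 1 + j by omega])).differentiableOn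
        one_ne_zero
    simp only [pd]
    exact ((ih (hf.of_le (by norm_cast; omega)) (hg.of_le (by norm_cast; omega))).partialX hU).trans
      (eqOn_partialX_sub hU (hdiff hf) (hdiff hg))

end IteratedPartials

theorem quadratic_remainder_ge {d D m P y z u v : ℝ} (hm : |m| ≤ D) (hu : |u| ≤ d)
    (hv : |v| ≤ d) :
    1 / 2 * P ^ 2 - (32 * d ^ 2 + 4 * D) * (y ^ 2 + z ^ 2)
      ≤ (m + P + 4 * y * u + 4 * v * z) ^ 2 - m ^ 2
          - 2 * m * (P + 4 * y * (u - z) + 4 * v * z) := by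
  rw [show (m + P + 4 * y * u + 4 * v * z) ^ 2 - m ^ 2 - 2 * m * (P + 4 * y * (u - z) + 4 * v * z)
      = (P + (4 * y * u + 4 * v * z)) ^ 2 + 8 * (m * (y * z)) by ring]
  set E := 4 * y * u + 4 * v * z
  have hP : 1 / 2 * P ^ 2 - E ^ 2 ≤ (P + E) ^ 2 := by nlinarith [sq_nonneg (P + 2 * E)]
  have hE : E ^ 2 ≤ 32 * d ^ 2 * (y ^ 2 + z ^ 2) := by
    have hu2 : u ^ 2 ≤ d ^ 2 := sq_le_sq' (abs_le.1 hu).1 (abs_le.1 hu).2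
    have hv2 : v ^ 2 ≤ d ^ 2 := sq_le_sq' (abs_le.1 hv).1 (abs_le.1 hv).2
    nlinarith [sq_nonneg (y * u - v * z), mul_le_mul_of_nonneg_left hu2 (sq_nonneg y),
      mul_le_mul_of_nonneg_left hv2 (sq_nonneg z)]
  have hyz : 2 * |y * z| ≤ y ^ 2 + z ^ 2 := by
    simpa [abs_mul, mul_assoc] using two_mul_le_add_sq |y| |z|
  have hmyz : |m| * (2 * |y * z|) ≤ D * (y ^ 2 + z ^ 2) :=
    mul_le_mul hm hyz (by positivity) ((abs_nonneg m).trans hm)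
  have hneg := neg_abs_le (m * (y * z))
  rw [abs_mul] at hneg
  linarith

section Rectangle

variable {a T d : ℝ} {U : Set (ℝ × ℝ)} {f g : ℝ × ℝ → ℝ}

theorem mk_fst_zero_mem {p : ℝ × ℝ} (hp : p ∈ Icc 0 a ×ˢ Icc 0 T) :
    (p.1, 0) ∈ Icc 0 a ×ˢ Icc 0 T :=
  ⟨hp.1, left_mem_Icc.2 (hp.2.1.trans hp.2.2)⟩

theorem ContinuousOn.integrableOn_rect {F : ℝ × ℝ → ℝ}
    (hF : ContinuousOn F (Icc 0 a ×ˢ Icc 0 T)) : IntegrableOn F (Rect a T) :=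
  (hF.integrableOn_compact (isCompact_Icc.prod isCompact_Icc)).mono_set
    (prod_mono Ioo_subset_Icc_self Ioo_subset_Icc_self)

theorem ContinuousOn.comp_mk_fst_zero (hf : ContinuousOn f U) (hKU : Icc 0 a ×ˢ Icc 0 T ⊆ U) :
    ContinuousOn (fun p : ℝ × ℝ => f (p.1, 0)) (Icc 0 a ×ˢ Icc 0 T) :=
  hf.comp (continuous_fst.prodMk continuous_const).continuousOn fun _ hp => hKU (mk_fst_zero_mem hp)

theorem sobNormSq_sub (hU : IsOpen U) (hKU : Icc 0 a ×ˢ Icc 0 T ⊆ U) {k : ℕ}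
    (hf : ContDiffOn ℝ k f U) (hg : ContDiffOn ℝ k g U) :
    sobNormSq k (Rect a T) f - sobNormSq k (Rect a T) g - 2 * sobInner k (Rect a T) g (f - g)
      = sobNormSq k (Rect a T) (f - g) := by
  simp only [sobNormSq, sobInner, Finset.mul_sum, ← Finset.sum_sub_distrib]
  refine Finset.sum_congr rfl fun i hi => Finset.sum_congr rfl fun j hj => ?_
  have hij : ((i + j : ℕ) : WithTop ℕ∞) ≤ k := by
    simp only [Finset.mem_range] at hi hj; norm_cast; omega
  have hpd {F : ℝ × ℝ → ℝ} (hF : ContDiffOn ℝ k F U) :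
      ContinuousOn (pd F i j) (Icc 0 a ×ˢ Icc 0 T) :=
    ((contDiffOn_pd hU (m := 0) (hF.of_le (by simpa using hij))).continuousOn).mono hKU
  have hsq {F : ℝ × ℝ → ℝ} (hF : ContDiffOn ℝ k F U) :
      IntegrableOn (fun p => pd F i j p ^ 2) (Rect a T) :=
    ((hpd hF).pow 2).integrableOn_rect
  have hcross : IntegrableOn (fun p => 2 * (pd g i j p * pd (f - g) i j p)) (Rect a T) :=
    (continuousOn_const.mul ((hpd hg).mul (hpd (hf.sub hg)))).integrableOn_rect
  have hdiff : IntegrableOn (fun p => pd f i j p ^ 2 - pd g i j p ^ 2) (Rect a T) :=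
    (hsq hf).sub (hsq hg)
  rw [← integral_const_mul, ← integral_sub (hsq hf) (hsq hg), ← integral_sub hdiff hcross]
  refine setIntegral_congr_fun (measurableSet_Ioo.prod measurableSet_Ioo) fun p hp => ?_
  have hsub := eqOn_pd_sub hU (hf.of_le hij) (hg.of_le hij)
    (hKU (prod_mono Ioo_subset_Icc_self Ioo_subset_Icc_self hp))
  simp only [hsub, Pi.sub_apply]
  ring

theorem abs_Mop_le (hU : IsOpen U) (hKU : Icc 0 a ×ˢ Icc 0 T ⊆ U) (hf : ContDiffOn ℝ 2 f U)
    (hb : DerivBound2 a T d f) {p : ℝ × ℝ} (hp : p ∈ Icc 0 a ×ˢ Icc 0 T) :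
    |Mop f p| ≤ 3 * d + 4 * d ^ 2 := by
  have h00 : |f p| ≤ d := by simpa [pd] using hb 0 0 (by norm_num) p hp
  have h10 : |partialX f (p.1, 0)| ≤ d := by
    simpa [pd] using hb 1 0 (by norm_num) _ (mk_fst_zero_mem hp)
  have h20 : |partialX (partialX f) p| ≤ d := by simpa [pd] using hb 2 0 (by norm_num) p hp
  have h11 : |partialT (partialX f) p| ≤ d := by
    -- `DerivBound2` controls `∂ₓ∂ₜ f`, whereas `Mop` contains `∂ₜ∂ₓ f`.
    simpa [pd, partialT_partialX_eq hU hf (hKU hp)] using hb 1 1 (by norm_num) p hp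
  have hprod : |partialX f (p.1, 0) * f p| ≤ d ^ 2 := by
    rw [abs_mul, sq]; exact mul_le_mul h10 h00 (abs_nonneg _) ((abs_nonneg _).trans h10)
  rw [abs_le] at *
  constructor <;> simp only [Mop] <;> linarith

theorem remainder_integrand_ge (hU : IsOpen U) (hKU : Icc 0 a ×ˢ Icc 0 T ⊆ U)
    {q₁ q₂ : ℝ × ℝ → ℝ} (hq₁ : ContDiffOn ℝ 2 q₁ U) (hq₂ : ContDiffOn ℝ 2 q₂ U)
    (hb₁ : DerivBound2 a T d q₁) (hb₂ : DerivBound2 a T d q₂) {p : ℝ × ℝ}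
    (hp : p ∈ Icc 0 a ×ˢ Icc 0 T) :
    1 / 2 * (partialX (partialX (q₂ - q₁)) p - 2 * partialT (partialX (q₂ - q₁)) p) ^ 2
      - (48 * d ^ 2 + 12 * d) * (partialX (q₂ - q₁) (p.1, 0) ^ 2 + (q₂ - q₁) p ^ 2)
    ≤ Mop q₂ p ^ 2 - Mop q₁ p ^ 2 - 2 * Mop q₁ p *
        (partialX (partialX (q₂ - q₁)) p - 2 * partialT (partialX (q₂ - q₁)) p
          + 4 * partialX (q₂ - q₁) (p.1, 0) * q₁ p + 4 * partialX q₁ (p.1, 0) * (q₂ - q₁) p) := by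
  have hX1 {F : ℝ × ℝ → ℝ} (hF : ContDiffOn ℝ 2 F U) : DifferentiableOn ℝ (partialX F) U :=
    (hF.partialX hU (m := 1) (by norm_num)).differentiableOn one_ne_zero
  have hX : EqOn (partialX (q₂ - q₁)) (partialX q₂ - partialX q₁) U :=
    eqOn_partialX_sub hU (hq₂.differentiableOn two_ne_zero) (hq₁.differentiableOn two_ne_zero)
  have hXX := (hX.partialX hU).trans (eqOn_partialX_sub hU (hX1 hq₂) (hX1 hq₁))
  have hTX := (hX.partialT hU).trans (eqOn_partialT_sub hU (hX1 hq₂) (hX1 hq₁))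
  have hM : Mop q₂ p = Mop q₁ p
      + (partialX (partialX (q₂ - q₁)) p - 2 * partialT (partialX (q₂ - q₁)) p)
      + 4 * partialX (q₂ - q₁) (p.1, 0) * q₂ p + 4 * partialX q₁ (p.1, 0) * (q₂ - q₁) p := by
    simp only [Mop, hX (hKU (mk_fst_zero_mem hp)), hXX (hKU hp), hTX (hKU hp), Pi.sub_apply]
    ring
  have hpoint := quadratic_remainder_ge (abs_Mop_le hU hKU hq₁ hb₁ hp)
    (by simpa [pd] using hb₂ 0 0 (by norm_num) p hp)
    (by simpa [pd] using hb₁ 1 0 (by norm_num) _ (mk_fst_zero_mem hp))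
    (P := partialX (partialX (q₂ - q₁)) p - 2 * partialT (partialX (q₂ - q₁)) p)
    (y := partialX (q₂ - q₁) (p.1, 0)) (z := (q₂ - q₁) p)
  rw [hM]
  simp only [Pi.sub_apply] at hpoint ⊢
  linear_combination hpoint

theorem integral_weighted_remainder_ge (hU : IsOpen U) (hKU : Icc 0 a ×ˢ Icc 0 T ⊆ U)
    {q₁ q₂ w : ℝ × ℝ → ℝ} (hq₁ : ContDiffOn ℝ 2 q₁ U) (hq₂ : ContDiffOn ℝ 2 q₂ U)
    (hb₁ : DerivBound2 a T d q₁) (hb₂ : DerivBound2 a T d q₂) (hw : Continuous w) (hw0 : 0 ≤ w) :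
    1 / 2 * (∫ p in Rect a T,
        (partialX (partialX (q₂ - q₁)) p - 2 * partialT (partialX (q₂ - q₁)) p) ^ 2 * w p)
      - (48 * d ^ 2 + 12 * d) * (∫ p in Rect a T,
        (partialX (q₂ - q₁) (p.1, 0) ^ 2 + (q₂ - q₁) p ^ 2) * w p)
    ≤ (∫ p in Rect a T, Mop q₂ p ^ 2 * w p) - (∫ p in Rect a T, Mop q₁ p ^ 2 * w p)
      - ∫ p in Rect a T, 2 * Mop q₁ p *
          (partialX (partialX (q₂ - q₁)) p - 2 * partialT (partialX (q₂ - q₁)) p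
            + 4 * partialX (q₂ - q₁) (p.1, 0) * q₁ p + 4 * partialX q₁ (p.1, 0) * (q₂ - q₁) p)
          * w p := by
  have hcont {F : ℝ × ℝ → ℝ} (hF : ContDiffOn ℝ 2 F U) :
      ContinuousOn F (Icc 0 a ×ˢ Icc 0 T) ∧
      ContinuousOn (fun p : ℝ × ℝ => partialX F (p.1, 0)) (Icc 0 a ×ˢ Icc 0 T) ∧
      ContinuousOn (partialX (partialX F)) (Icc 0 a ×ˢ Icc 0 T) ∧
      ContinuousOn (partialT (partialX F)) (Icc 0 a ×ˢ Icc 0 T) := by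
    have hX : ContDiffOn ℝ 1 (partialX F) U := hF.partialX hU (by norm_num)
    exact ⟨hF.continuousOn.mono hKU, hX.continuousOn.comp_mk_fst_zero hKU,
      ((hX.partialX hU (m := 0) (by norm_num)).continuousOn).mono hKU,
      ((hX.partialT hU (m := 0) (by norm_num)).continuousOn).mono hKU⟩
  obtain ⟨hc₁, hc₁X, hc₁XX, hc₁TX⟩ := hcont hq₁
  obtain ⟨hc₂, hc₂X, hc₂XX, hc₂TX⟩ := hcont hq₂
  obtain ⟨hc, hcX, hcXX, hcTX⟩ := hcont (hq₂.sub hq₁ : ContDiffOn ℝ 2 (q₂ - q₁) U)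
  have hM₁ : ContinuousOn (Mop q₁) (Icc 0 a ×ˢ Icc 0 T) := by unfold Mop; fun_prop
  have hM₂ : ContinuousOn (Mop q₂) (Icc 0 a ×ˢ Icc 0 T) := by unfold Mop; fun_prop
  rw [← integral_const_mul, ← integral_const_mul, ← integral_sub, ← integral_sub, ← integral_sub]
  · refine setIntegral_mono_on (ContinuousOn.integrableOn_rect (by fun_prop))
      (ContinuousOn.integrableOn_rect (by fun_prop)) (measurableSet_Ioo.prod measurableSet_Ioo)
      fun p hp => ?_
    have hpoint := remainder_integrand_ge hU hKU hq₁ hq₂ hb₁ hb₂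
      (prod_mono Ioo_subset_Icc_self Ioo_subset_Icc_self hp)
    linear_combination mul_le_mul_of_nonneg_right hpoint (hw0 p)
  all_goals exact ContinuousOn.integrableOn_rect (by fun_prop)

end Rectangle

/-- Intermediate convexity bound (6.210) from the proof of Theorem 2. -/
theorem intermediate_convexity_bound (d : ℝ) (hd : 0 < d) :
    ∃ B : ℝ, 0 < B ∧
      ∀ a T α : ℝ, 0 < a → 0 < T → α ∈ Ioo (0 : ℝ) (1 / 2) →
      ∀ lam : ℝ, 1 ≤ lam → ∀ γ : ℝ, 0 < γ →
      ∀ q₁ q₂ : ℝ × ℝ → ℝ, C4Near a T q₁ → C4Near a T q₂ →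
        DerivBound2 a T d q₁ → DerivBound2 a T d q₂ →
        ∀ h : ℝ × ℝ → ℝ, (∀ p : ℝ × ℝ, h p = q₂ p - q₁ p) →
        Kfunc a T α lam γ q₂ - Kfunc a T α lam γ q₁ - Afunc a T α lam γ q₁ h
          ≥ (1 / 2) * (∫ p in Rect a T,
                (partialX (partialX h) p - 2 * partialT (partialX h) p) ^ 2
                  * carlemanWeight α lam p)
            - B * (∫ p in Rect a T,
                ((partialX h (p.1, 0)) ^ 2 + (h p) ^ 2) * carlemanWeight α lam p)
            + γ * sobNormSq 4 (Rect a T) h := by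
  refine ⟨48 * d ^ 2 + 12 * d, by positivity, ?_⟩
  intro a T α _ _ _ lam _ γ _ q₁ q₂ ⟨U₁, hU₁, hKU₁, hq₁⟩ ⟨U₂, hU₂, hKU₂, hq₂⟩ hb₁ hb₂ h hh
  obtain rfl : h = q₂ - q₁ := funext hh
  have hU := hU₁.inter hU₂
  have hKU := subset_inter hKU₁ hKU₂
  replace hq₁ := hq₁.mono (inter_subset_left (t := U₂))
  replace hq₂ := hq₂.mono (inter_subset_right (s := U₁))
  have hsob := sobNormSq_sub (k := 4) hU hKU hq₂ hq₁
  have hweighted := integral_weighted_remainder_ge hU hKU (hq₁.of_le (by norm_num))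
    (hq₂.of_le (by norm_num)) hb₁ hb₂ (w := carlemanWeight α lam)
    (by unfold carlemanWeight; fun_prop) fun _ => Real.exp_nonneg _
  simp only [Kfunc, Afunc]
  linear_combination hweighted - γ * hsob
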